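/- Let $W$ be a complex inner product space with inner product $\langle \cdot, \cdot \rangle$ (linear in the first variable), and let $E = W \to_{\!0} \mathbb{C}$ be the free complex vector space on $W$ with basis vectors $\epsilon_\xi$. Define the sesquilinear form $\langle\!\langle \cdot, \cdot \rangle\!\rangle : E \times E \to \mathbb{C}$ by $\langle\!\langle \phi, \psi \rangle\!\rangle = \sum_{\xi, \eta \in W} \phi(\xi)\, \overline{\psi(\eta)}\, e^{2\langle \xi, \eta \rangle}$ (a finite sum), i.e. the form determined by $\langle\!\langle \epsilon_\xi, \epsilon_\eta \rangle\!\rangle = e^{2\langle \xi, \eta \rangle}$. For $a \in W$ let $\rho(a,a) : E \to E$ be the linear map $\rho(a,a)\,\epsilon_\xi = \exp(-\langle a,a\rangle - 2\langle \xi, a\rangle)\,\epsilon_{\xi+a}$. Then $\rho(a,a)$ is isometric for this form: $\langle\!\langle \rho(a,a)\phi,\ \rho(a,a)\psi \rangle\!\rangle = \langle\!\langle \phi, \psi \rangle\!\rangle$ for all $\phi, \psi \in E$ and all $a \in W$. -/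

import Mathlib

/-- The Hermitian form on the free complex vector space `E = W →₀ ℂ` on a complex
inner product space `W`, determined on basis vectors by
`⟨⟨ε_ξ, ε_η⟩⟩ = exp(2⟨ξ,η⟩)`; on general elements it is the finite sum
`⟨⟨φ, ψ⟩⟩ = ∑_{ξ,η} φ(ξ) conj(ψ(η)) exp(2⟨ξ,η⟩)`. -/
noncomputable def hermForm {W : Type*} [NormedAddCommGroup W] [InnerProductSpace ℂ W]
    (φ ψ : W →₀ ℂ) : ℂ :=
  φ.sum fun ξ c => ψ.sum fun η d =>
    c * (starRingEnd ℂ) d * Complex.exp (2 * (inner ℂ ξ η : ℂ))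

/-- The operator `ρ(a,a)` on `E = W →₀ ℂ`, the `ℂ`-linear map determined by
`ρ(a,a) ε_ξ = exp(-⟨a,a⟩ - 2⟨ξ,a⟩) ε_{ξ+a}` on the basis vectors. -/
noncomputable def rhoDiag {W : Type*} [NormedAddCommGroup W] [InnerProductSpace ℂ W]
    (a : W) : (W →₀ ℂ) →ₗ[ℂ] (W →₀ ℂ) :=
  Finsupp.lsum ℂ fun ξ : W =>
    Complex.exp (-(inner ℂ a a : ℂ) - 2 * (inner ℂ ξ a : ℂ)) • Finsupp.lsingle (ξ + a)

/-! Both `hermForm` and `rhoDiag` are instances of two general constructions on `X →₀ ℂ`: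
the sesquilinear form `kernelForm K` with `⟨⟨ε_ξ, ε_η⟩⟩ = K ξ η`, and the weighted shift
`ε_ξ ↦ w ξ • ε_{f ξ}`. A weighted shift preserves a kernel form as soon as it does so on
basis vectors; for `ρ(a,a)` this is the identity
`exp(-⟨a,a⟩ - 2⟨ξ,a⟩) · conj (exp(-⟨a,a⟩ - 2⟨η,a⟩)) · exp(2⟨ξ+a,η+a⟩) = exp(2⟨ξ,η⟩)`,
obtained by expanding `⟨ξ+a,η+a⟩`. -/

open ComplexConjugate

namespace Finsupp

variable {X : Type*}

noncomputable def kernelForm (K : X → X → ℂ) (φ ψ : X →₀ ℂ) : ℂ :=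
  φ.sum fun ξ c => ψ.sum fun η d => c * conj d * K ξ η

noncomputable def weightedShift (f : X → X) (w : X → ℂ) : (X →₀ ℂ) →ₗ[ℂ] (X →₀ ℂ) :=
  lsum ℂ fun ξ => w ξ • lsingle (f ξ)

section kernelForm

variable (K : X → X → ℂ)

@[simp]
lemma kernelForm_zero_left (ψ : X →₀ ℂ) : kernelForm K 0 ψ = 0 := by
  simp [kernelForm]

@[simp]
lemma kernelForm_zero_right (φ : X →₀ ℂ) : kernelForm K φ 0 = 0 := by
  simp [kernelForm]

lemma kernelForm_single_single (ξ η : X) (c d : ℂ) :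
    kernelForm K (single ξ c) (single η d) = c * conj d * K ξ η := by
  simp [kernelForm]

lemma kernelForm_add_left (φ₁ φ₂ ψ : X →₀ ℂ) :
    kernelForm K (φ₁ + φ₂) ψ = kernelForm K φ₁ ψ + kernelForm K φ₂ ψ := by
  classical
  refine sum_add_index' (fun _ => by simp) fun ξ c₁ c₂ => ?_
  rw [← sum_add]
  simp only [add_mul]

lemma kernelForm_add_right (φ ψ₁ ψ₂ : X →₀ ℂ) :
    kernelForm K φ (ψ₁ + ψ₂) = kernelForm K φ ψ₁ + kernelForm K φ ψ₂ := by
  classical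
  rw [kernelForm, kernelForm, kernelForm, ← sum_add]
  refine sum_congr fun ξ _ => sum_add_index' (fun _ => by simp) fun η d₁ d₂ => ?_
  simp only [map_add, mul_add, add_mul]

end kernelForm

lemma weightedShift_single (f : X → X) (w : X → ℂ) (ξ : X) (c : ℂ) :
    weightedShift f w (single ξ c) = single (f ξ) (w ξ * c) := by
  simp [weightedShift, smul_single]

lemma kernelForm_weightedShift {K : X → X → ℂ} {f : X → X} {w : X → ℂ}
    (h : ∀ ξ η, w ξ * conj (w η) * K (f ξ) (f η) = K ξ η) (φ ψ : X →₀ ℂ) :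
    kernelForm K (weightedShift f w φ) (weightedShift f w ψ) = kernelForm K φ ψ := by
  induction φ using induction_linear with
  | zero => simp
  | add φ₁ φ₂ h₁ h₂ => rw [map_add, kernelForm_add_left, kernelForm_add_left, h₁, h₂]
  | single ξ c =>
    induction ψ using induction_linear with
    | zero => simp
    | add ψ₁ ψ₂ h₁ h₂ => rw [map_add, kernelForm_add_right, kernelForm_add_right, h₁, h₂]
    | single η d =>
      simp only [weightedShift_single, kernelForm_single_single, map_mul, ← h ξ η]
      ring

end Finsupp

lemma exp_rhoDiag_weight_mul_conj {W : Type*} [NormedAddCommGroup W] [InnerProductSpace ℂ W]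
    (a ξ η : W) :
    Complex.exp (-(inner ℂ a a : ℂ) - 2 * inner ℂ ξ a) *
        conj (Complex.exp (-(inner ℂ a a : ℂ) - 2 * inner ℂ η a)) *
        Complex.exp (2 * inner ℂ (ξ + a) (η + a)) =
      Complex.exp (2 * inner ℂ ξ η) := by
  rw [← Complex.exp_conj, ← Complex.exp_add, ← Complex.exp_add]
  congr 1
  simp only [map_sub, map_neg, map_mul, inner_conj_symm, inner_add_left, inner_add_right,
    Complex.conj_ofNat]
  ring

/-- Subsection 3.1 of the paper: the operators `ρ(a,a)` (the action of the real
elements `a + ā` of the Heisenberg group) are isometric for the Hermitian form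
`⟨⟨·,·⟩⟩` determined by `⟨⟨ε_ξ, ε_η⟩⟩ = exp(2⟨ξ,η⟩)`:
`⟨⟨ρ(a,a)φ, ρ(a,a)ψ⟩⟩ = ⟨⟨φ, ψ⟩⟩` for all `φ, ψ ∈ E` and all `a ∈ W`. -/
theorem rhoDiag_isometric {W : Type*} [NormedAddCommGroup W] [InnerProductSpace ℂ W]
    (a : W) (φ ψ : W →₀ ℂ) :
    hermForm (rhoDiag a φ) (rhoDiag a ψ) = hermForm φ ψ :=
  Finsupp.kernelForm_weightedShift (exp_rhoDiag_weight_mul_conj a) φ ψ
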